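/- Let H be a real Hilbert space, let (u_n)_{n≥1} be an orthonormal family in H, and let (λ_n)_{n≥1} be nonnegative reals with λ_n ≤ c₁·exp(−c₂·√n) for all n ≥ 1, where c₁ ≥ 0 and c₂ > 0. Then for every integer N ≥ 1 the series ∑_{n=N+1}^∞ √λ_n · u_n converges in H and ‖∑_{n=N+1}^∞ √λ_n · u_n‖ ≤ √((2c₁/c₂²)·(1 + c₂·√N)) · exp(−(c₂/2)·√N). -/

import Mathlib

/-!
By Parseval for the orthonormal family, `‖∑_{n>N} √λₙ uₙ‖² = ∑_{n>N} λₙ ≤ c₁ ∑_{n>N} e^{-c₂√n}`.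
Since `x ↦ e^{-c₂√x}` is decreasing, this sum is at most `∫_N^∞ e^{-c₂√x} dx`, and
`-(2/c₂²)(1 + c₂√x) e^{-c₂√x}` is an antiderivative of the integrand, so the integral equals
`(2/c₂²)(1 + c₂√N) e^{-c₂√N}`.
-/

open Real

section Orthonormal

variable {𝕜 E ι : Type*} [RCLike 𝕜] [NormedAddCommGroup E] [InnerProductSpace 𝕜 E]
  {v : ι → E}

theorem Orthonormal.norm_sum_smul_sq (hv : Orthonormal 𝕜 v) (a : ι → 𝕜) (s : Finset ι) :
    ‖∑ i ∈ s, a i • v i‖ ^ 2 = ∑ i ∈ s, ‖a i‖ ^ 2 := by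
  simpa using hv.orthogonalFamily.norm_sum a s

theorem Orthonormal.summable_smul_iff [CompleteSpace E] (hv : Orthonormal 𝕜 v) (a : ι → 𝕜) :
    Summable (fun i => a i • v i) ↔ Summable (fun i => ‖a i‖ ^ 2) := by
  simpa using hv.orthogonalFamily.summable_iff_norm_sq_summable a

theorem Orthonormal.hasSum_norm_sq (hv : Orthonormal 𝕜 v) {a : ι → 𝕜} {x : E}
    (hx : HasSum (fun i => a i • v i) x) : HasSum (fun i => ‖a i‖ ^ 2) (‖x‖ ^ 2) :=
  (((continuous_norm.pow 2).tendsto x).comp hx).congr (hv.norm_sum_smul_sq a)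

theorem Orthonormal.summable_smul_and_norm_tsum_le [CompleteSpace E] {v : ℕ → E}
    (hv : Orthonormal 𝕜 v) {a : ℕ → 𝕜} {B : ℝ}
    (hB : ∀ M, ∑ n ∈ Finset.range M, ‖a n‖ ^ 2 ≤ B) :
    Summable (fun n => a n • v n) ∧ ‖∑' n, a n • v n‖ ≤ √B := by
  have hsq : Summable (fun n => ‖a n‖ ^ 2) :=
    summable_of_sum_range_le (fun _ => by positivity) hB
  have hsum := (hv.summable_smul_iff a).mpr hsq
  refine ⟨hsum, ?_⟩
  have hnorm_sq : ‖∑' n, a n • v n‖ ^ 2 ≤ B :=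
    (hv.hasSum_norm_sq hsum.hasSum).tsum_eq ▸ hsq.tsum_le_of_sum_range_le hB
  exact Real.le_sqrt_of_sq_le hnorm_sq

end Orthonormal

theorem hasDerivAt_exp_neg_mul_sqrt_antideriv {c x : ℝ} (hc : c ≠ 0) (hx : 0 < x) :
    HasDerivAt (fun y => -(2 / c ^ 2) * ((1 + c * √y) * exp (-c * √y))) (exp (-c * √x)) x := by
  have hsqrt : HasDerivAt (√·) (1 / (2 * √x)) x := hasDerivAt_sqrt hx.ne'
  have hexp := (hsqrt.const_mul (-c)).exp
  refine ((((hsqrt.const_mul c).const_add 1).mul hexp).const_mul (-(2 / c ^ 2))).congr_deriv ?_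
  have : √x ≠ 0 := (sqrt_pos.mpr hx).ne'
  field_simp
  ring

theorem integral_exp_neg_mul_sqrt_le {c a b : ℝ} (hc : 0 < c) (ha : 0 ≤ a) (hab : a ≤ b) :
    ∫ x in a..b, exp (-c * √x) ≤ 2 / c ^ 2 * (1 + c * √a) * exp (-c * √a) := by
  have hcont : Continuous fun x => exp (-c * √x) := by fun_prop
  rw [intervalIntegral.integral_eq_sub_of_hasDeriv_right_of_le hab (by fun_prop)
    (fun x hx => (hasDerivAt_exp_neg_mul_sqrt_antideriv hc.ne' (ha.trans_lt hx.1)).hasDerivWithinAt)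
    (hcont.intervalIntegrable a b)]
  have : 0 ≤ 2 / c ^ 2 * ((1 + c * √b) * exp (-c * √b)) := by positivity
  linarith

theorem sum_exp_neg_mul_sqrt_le {c x₀ : ℝ} (hc : 0 < c) (hx₀ : 0 ≤ x₀) (M : ℕ) :
    ∑ i ∈ Finset.range M, exp (-c * √(x₀ + ↑(i + 1))) ≤
      2 / c ^ 2 * (1 + c * √x₀) * exp (-c * √x₀) := by
  have hanti : AntitoneOn (fun x => exp (-c * √x)) (Set.Icc x₀ (x₀ + M)) := fun x _ y _ hxy => by
    simp only [exp_le_exp, neg_mul, neg_le_neg_iff]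
    gcongr
  exact hanti.sum_le_integral.trans (integral_exp_neg_mul_sqrt_le hc hx₀ (by simp))

/-- Hilbert-space form of Lemma 3.2(i): if `(u_n)_{n ≥ 1}` is an orthonormal family in a
real Hilbert space `H` and `0 ≤ λ n ≤ c₁ exp (-c₂ √n)` for all `n ≥ 1`, then for every
`N ≥ 1` the tail series `∑_{n=N+1}^∞ √(λ n) • u n` converges in `H` with
`‖∑_{n=N+1}^∞ √(λ n) • u n‖ ≤ √((2c₁/c₂²)(1 + c₂ √N)) · exp (-(c₂/2) √N)`. -/
theorem stmt3 {H : Type*} [NormedAddCommGroup H] [InnerProductSpace ℝ H] [CompleteSpace H]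
    (u : ℕ → H) (hu : Orthonormal ℝ (fun n : {n : ℕ // 1 ≤ n} => u n))
    (lam : ℕ → ℝ) (c₁ c₂ : ℝ) (hc₁ : 0 ≤ c₁) (hc₂ : 0 < c₂)
    (hlam : ∀ n : ℕ, 1 ≤ n →
      0 ≤ lam n ∧ lam n ≤ c₁ * Real.exp (-c₂ * Real.sqrt n)) :
    ∀ N : ℕ, 1 ≤ N →
      Summable (fun n : ℕ => Real.sqrt (lam (n + (N + 1))) • u (n + (N + 1))) ∧
      ‖∑' n : ℕ, Real.sqrt (lam (n + (N + 1))) • u (n + (N + 1))‖ ≤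
        Real.sqrt ((2 * c₁ / c₂ ^ 2) * (1 + c₂ * Real.sqrt N)) *
          Real.exp (-(c₂ / 2) * Real.sqrt N) := by
  intro N _
  have hv : Orthonormal ℝ (fun n => u (n + (N + 1))) :=
    hu.comp (fun n => ⟨n + (N + 1), by omega⟩) fun m n h => by simpa using h
  have hB : ∀ M, ∑ n ∈ Finset.range M, ‖√(lam (n + (N + 1)))‖ ^ 2 ≤
      c₁ * (2 / c₂ ^ 2 * (1 + c₂ * √N) * exp (-c₂ * √N)) := fun M => calc
    _ = ∑ n ∈ Finset.range M, lam (n + (N + 1)) := Finset.sum_congr rfl fun n _ => by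
        rw [norm_eq_abs, sq_abs, sq_sqrt (hlam _ (by omega)).1]
    _ ≤ ∑ n ∈ Finset.range M, c₁ * exp (-c₂ * √(N + ↑(n + 1))) :=
        Finset.sum_le_sum fun n _ => (hlam _ (by omega)).2.trans_eq (by push_cast; ring_nf)
    _ ≤ _ := by
        rw [← Finset.mul_sum]
        exact mul_le_mul_of_nonneg_left (sum_exp_neg_mul_sqrt_le hc₂ N.cast_nonneg M) hc₁
  obtain ⟨hsum, hnorm⟩ := hv.summable_smul_and_norm_tsum_le hB
  refine ⟨hsum, hnorm.trans_eq ?_⟩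
  rw [← mul_assoc, sqrt_mul' _ (exp_pos _).le, ← exp_half]
  ring_nf
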